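/- arXiv:math/0210051 — 2 statements merged into one kernel-verified Lean document; each statement's English description precedes it below -/
import Mathlib

section
/- For a generic configuration P of n points in the plane and three points P_i, P_j, P_k of P, let α_i be the number of lines through two points of P∖{P_i,P_j,P_k} separating P_i from both P_j and P_k (similarly α_j, α_k), and let σ_0, σ_i, σ_j, σ_k be the number of points of P∖{P_i,P_j,P_k} in the interiors of the four triangles Δ_0, Δ_i, Δ_j, Δ_k into which the three lines through pairs of {P_i,P_j,P_k} divide the plane (Δ_i, Δ_j, Δ_k being the triangles opposite to P_i, P_j, P_k respectively). Then n(P_i,P_j) = α_i + α_j + σ_0 + σ_k, where n(P,Q) denotes the number of lines spanned by pairs of points of P∖{P,Q} that separate P from Q. -/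
open scoped Classical

noncomputable section

/-- Orientation determinant of two vectors in the plane. -/
def det2 (u v : ℝ × ℝ) : ℝ := u.1 * v.2 - u.2 * v.1

/-- The line through `A` and `B` separates the points `P` and `Q`
(they lie in distinct open half-planes determined by the line). -/
def SepLine (A B P Q : ℝ × ℝ) : Prop :=
  det2 (B - A) (P - A) * det2 (B - A) (Q - A) < 0

/-- A finite planar point set is a generic configuration if no three of its
points are collinear. -/
def Generic (C : Finset (ℝ × ℝ)) : Prop :=
  ∀ a ∈ C, ∀ b ∈ C, ∀ c ∈ C, a ≠ b → a ≠ c → b ≠ c →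
    ¬ Collinear ℝ ({a, b, c} : Set (ℝ × ℝ))

/-- `nsep C P Q` is the number of lines spanned by (unordered) pairs of points of
`C \ {P,Q}` that separate `P` from `Q`. -/
def nsep (C : Finset (ℝ × ℝ)) (P Q : ℝ × ℝ) : ℕ :=
  (((C \ {P, Q}).powersetCard 2).filter
    (fun s => ∃ A ∈ s, ∃ B ∈ s, A ≠ B ∧ SepLine A B P Q)).card

/-- The Orchard relation: `P ∼ Q` iff `n(P,Q) ≡ n - 3 (mod 2)` where `n = |C|`. -/
def Orchard (C : Finset (ℝ × ℝ)) (P Q : ℝ × ℝ) : Prop :=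
  (nsep C P Q : ℤ) ≡ (C.card : ℤ) - 3 [ZMOD 2]

/-- A configuration is monochromatic if all its points are Orchard-equivalent. -/
def Mono (C : Finset (ℝ × ℝ)) : Prop :=
  ∀ P ∈ C, ∀ Q ∈ C, P ≠ Q → Orchard C P Q

/-- A configuration is in convex position if each of its points is a vertex of
the convex hull. -/
def ConvexPos (C : Finset (ℝ × ℝ)) : Prop :=
  ∀ P ∈ C, P ∉ convexHull ℝ ((C : Set (ℝ × ℝ)) \ {P})

/-- `X` and `Q` lie strictly on the same side of the line through `A`, `B`. -/
def SameSide (A B P Q : ℝ × ℝ) : Prop :=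
  0 < det2 (B - A) (P - A) * det2 (B - A) (Q - A)

/-- `X` lies in the interior of the central triangle `Δ₀` determined by
`Pi`, `Pj`, `Pk`: it is on the same side of each of the three lines as the
opposite vertex. -/
def InDelta0 (Pi Pj Pk X : ℝ × ℝ) : Prop :=
  SameSide Pj Pk X Pi ∧ SameSide Pi Pk X Pj ∧ SameSide Pi Pj X Pk

/-- `X` lies in the interior of the projective triangle `Δ_i` associated to the
vertex `Pi`: affinely this is the region beyond the edge `[Pj,Pk]` together with
the vertical-angle region at the vertex `Pi`. -/
def InDeltaV (Pi Pj Pk X : ℝ × ℝ) : Prop :=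
  (SepLine Pj Pk X Pi ∧ SameSide Pi Pk X Pj ∧ SameSide Pi Pj X Pk) ∨
  (SameSide Pj Pk X Pi ∧ SepLine Pi Pk X Pj ∧ SepLine Pi Pj X Pk)

/-- `α_i`: the number of lines spanned by pairs of points of `C \ {Pi,Pj,Pk}`
separating `Pi` from both `Pj` and `Pk`. -/
def alpha (C : Finset (ℝ × ℝ)) (Pi Pj Pk : ℝ × ℝ) : ℕ :=
  (((C \ {Pi, Pj, Pk}).powersetCard 2).filter
    (fun s => ∃ A ∈ s, ∃ B ∈ s, A ≠ B ∧ SepLine A B Pi Pj ∧ SepLine A B Pi Pk)).card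

/-- `σ₀`: the number of points of `C \ {Pi,Pj,Pk}` in the interior of `Δ₀`. -/
def sigma0 (C : Finset (ℝ × ℝ)) (Pi Pj Pk : ℝ × ℝ) : ℕ :=
  ((C \ {Pi, Pj, Pk}).filter (fun X => InDelta0 Pi Pj Pk X)).card

/-- `σ_i`: the number of points of `C \ {Pi,Pj,Pk}` in the interior of the
triangle `Δ_i` associated to the vertex `Pi`. -/
def sigmaV (C : Finset (ℝ × ℝ)) (Pi Pj Pk : ℝ × ℝ) : ℕ :=
  ((C \ {Pi, Pj, Pk}).filter (fun X => InDeltaV Pi Pj Pk X)).card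

lemma collinear_of_det (a b c : ℝ × ℝ) (h : det2 (b - a) (c - a) = 0) :
    Collinear ℝ ({a, b, c} : Set (ℝ × ℝ)) := by
  by_cases hba : b = a
  · subst hba
    rw [Set.insert_comm, Set.insert_idem]
    exact collinear_pair ℝ b c
  · rw [collinear_iff_exists_forall_eq_smul_vadd]
    refine ⟨a, b - a, ?_⟩
    set u := b - a with hu
    have hv : u.1 ^ 2 + u.2 ^ 2 ≠ 0 := by
      intro h0
      apply hba
      have h1 : u.1 = 0 := by nlinarith [sq_nonneg u.1, sq_nonneg u.2]
      have h2 : u.2 = 0 := by nlinarith [sq_nonneg u.1, sq_nonneg u.2]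
      have : u = 0 := Prod.ext h1 h2
      rw [hu] at this
      exact sub_eq_zero.mp this
    have key : ∀ p : ℝ × ℝ, det2 u (p - a) = 0 → ∃ t : ℝ, p = t • u +ᵥ a := by
      intro p hp
      set w := p - a with hw
      refine ⟨(w.1 * u.1 + w.2 * u.2) / (u.1 ^ 2 + u.2 ^ 2), ?_⟩
      have hgoal : p = ((w.1 * u.1 + w.2 * u.2) / (u.1 ^ 2 + u.2 ^ 2)) • u + a := by
        have h1 : w.1 * (u.1 ^ 2 + u.2 ^ 2) = (w.1 * u.1 + w.2 * u.2) * u.1 := by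
          have hd : u.1 * w.2 - u.2 * w.1 = 0 := hp
          linear_combination (-u.2) * hd
        have h2 : w.2 * (u.1 ^ 2 + u.2 ^ 2) = (w.1 * u.1 + w.2 * u.2) * u.2 := by
          have hd : u.1 * w.2 - u.2 * w.1 = 0 := hp
          linear_combination u.1 * hd
        have e1 : p.1 = ((w.1 * u.1 + w.2 * u.2) / (u.1 ^ 2 + u.2 ^ 2)) * u.1 + a.1 := by
          have : p.1 - a.1 = w.1 := by rw [hw]; simp
          field_simp
          linear_combination (u.1 ^ 2 + u.2 ^ 2) * this + h1
        have e2 : p.2 = ((w.1 * u.1 + w.2 * u.2) / (u.1 ^ 2 + u.2 ^ 2)) * u.2 + a.2 := by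
          have : p.2 - a.2 = w.2 := by rw [hw]; simp
          field_simp
          linear_combination (u.1 ^ 2 + u.2 ^ 2) * this + h2
        exact Prod.ext (by simpa using e1) (by simpa using e2)
      simpa [vadd_eq_add] using hgoal
    intro p hp
    rcases hp with rfl | rfl | rfl
    · exact ⟨0, by simp⟩
    · exact ⟨1, by simp [hu]⟩
    · exact key p h

/-- abstract sign lemma -/
lemma signs (a b c D : ℝ) (ha : a ≠ 0) (hb : b ≠ 0) (hc : c ≠ 0) (hD : D ≠ 0)
    (hid : a - b + c = D) :
    (-a) * (-b) < 0 ↔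
      ((0 < (-b) * D ∧ 0 < a * D ∧ 0 < c * D) ∨
       ((c * D < 0 ∧ 0 < (-b) * D ∧ 0 < a * D) ∨
        (0 < c * D ∧ (-b) * D < 0 ∧ a * D < 0))) := by
  rcases lt_or_gt_of_ne hD with hD' | hD' <;>
  rcases lt_or_gt_of_ne ha with ha' | ha' <;>
  rcases lt_or_gt_of_ne hb with hb' | hb' <;>
  rcases lt_or_gt_of_ne hc with hc' | hc' <;>
  constructor <;> intro h <;>
    first
      | (left; refine ⟨by nlinarith, by nlinarith, by nlinarith⟩)
      | (right; left; refine ⟨by nlinarith, by nlinarith, by nlinarith⟩)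
      | (right; right; refine ⟨by nlinarith, by nlinarith, by nlinarith⟩)
      | nlinarith
      | (exfalso; rcases h with ⟨h1,h2,h3⟩ | ⟨h1,h2,h3⟩ | ⟨h1,h2,h3⟩ <;> nlinarith)

lemma key_geom (Pi Pj Pk X : ℝ × ℝ)
    (ha : det2 (Pi - Pk) (X - Pk) ≠ 0) (hb : det2 (Pj - Pk) (X - Pk) ≠ 0)
    (hc : det2 (Pj - Pi) (X - Pi) ≠ 0) (hD : det2 (Pj - Pi) (Pk - Pi) ≠ 0) :
    SepLine Pk X Pi Pj ↔ (InDelta0 Pi Pj Pk X ∨ InDeltaV Pk Pi Pj X) := by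
  set a := det2 (Pi - Pk) (X - Pk) with ha'
  set b := det2 (Pj - Pk) (X - Pk) with hb'
  set c := det2 (Pj - Pi) (X - Pi) with hc'
  set D := det2 (Pj - Pi) (Pk - Pi) with hD'
  have hid : a - b + c = D := by simp only [ha', hb', hc', hD', det2, Prod.fst_sub, Prod.snd_sub]; ring
  have e1 : det2 (X - Pk) (Pi - Pk) = -a := by simp only [ha', det2, Prod.fst_sub, Prod.snd_sub]; ring
  have e2 : det2 (X - Pk) (Pj - Pk) = -b := by simp only [hb', det2, Prod.fst_sub, Prod.snd_sub]; ring
  have e3 : det2 (Pk - Pj) (X - Pj) * det2 (Pk - Pj) (Pi - Pj) = (-b) * D := by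
    simp only [hb', hD', det2, Prod.fst_sub, Prod.snd_sub]; ring
  have e4 : det2 (Pk - Pi) (X - Pi) * det2 (Pk - Pi) (Pj - Pi) = a * D := by
    simp only [ha', hD', det2, Prod.fst_sub, Prod.snd_sub]; ring
  have e5 : det2 (Pj - Pi) (X - Pi) * det2 (Pj - Pi) (Pk - Pi) = c * D := rfl
  have e6 : det2 (Pj - Pk) (X - Pk) * det2 (Pj - Pk) (Pi - Pk) = (-b) * D := by
    simp only [hb', hD', det2, Prod.fst_sub, Prod.snd_sub]; ring
  have e7 : det2 (Pi - Pk) (X - Pk) * det2 (Pi - Pk) (Pj - Pk) = a * D := by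
    simp only [ha', hD', det2, Prod.fst_sub, Prod.snd_sub]; ring
  rw [SepLine, InDelta0, InDeltaV, SepLine, SepLine, SepLine, SameSide, SameSide,
    SameSide, SameSide, SameSide, e1, e2, e3, e4, e5, e6, e7]
  have := signs a b c D ha hb hc hD hid
  tauto

lemma sep_comm (A B P Q : ℝ × ℝ) : SepLine A B P Q ↔ SepLine B A P Q := by
  unfold SepLine det2
  simp only [Prod.fst_sub, Prod.snd_sub]
  constructor <;> intro h <;> nlinarith [h]

lemma sep_swap (A B P Q : ℝ × ℝ) : SepLine A B P Q ↔ SepLine A B Q P := by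
  unfold SepLine; rw [mul_comm]

lemma three_prod (p q r : ℝ) (h1 : p * q < 0) (h2 : p * r < 0) (h3 : q * r < 0) : False := by
  nlinarith [sq_nonneg (p * q * r), mul_pos_of_neg_of_neg h1 h2]

lemma split_prod (p q r : ℝ) (h : p * q < 0) (hr : r ≠ 0) : p * r < 0 ∨ q * r < 0 := by
  rcases lt_or_gt_of_ne hr with hr' | hr' <;>
  rcases lt_trichotomy p 0 with hp | hp | hp <;>
    first
      | (left; nlinarith)
      | (right; nlinarith)
      | (exfalso; nlinarith)

lemma delta_disj (Pi Pj Pk X : ℝ × ℝ) : ¬ (InDelta0 Pi Pj Pk X ∧ InDeltaV Pk Pi Pj X) := by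
  rintro ⟨⟨h1, h2, h3⟩, ⟨g1, g2, g3⟩ | ⟨g1, g2, g3⟩⟩
  · simp only [SepLine, SameSide, det2, Prod.fst_sub, Prod.snd_sub] at h3 g1; nlinarith [h3, g1]
  · simp only [SepLine, SameSide, det2, Prod.fst_sub, Prod.snd_sub] at h2 g3; nlinarith [h2, g3]

lemma pair_norm {A B : ℝ × ℝ} (hAB : A ≠ B) {R : ℝ × ℝ → ℝ × ℝ → Prop}
    (hsym : ∀ x y, R x y → R y x)
    (h : ∃ x ∈ ({A, B} : Finset (ℝ × ℝ)), ∃ y ∈ ({A, B} : Finset (ℝ × ℝ)), x ≠ y ∧ R x y) :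
    R A B := by
  obtain ⟨x, hx, y, hy, hxy, hR⟩ := h
  simp only [Finset.mem_insert, Finset.mem_singleton] at hx hy
  rcases hx with rfl | rfl <;> rcases hy with rfl | rfl
  · exact absurd rfl hxy
  · exact hR
  · exact hsym _ _ hR
  · exact absurd rfl hxy

lemma det_ne {C : Finset (ℝ × ℝ)} (hC : Generic C) {a b c : ℝ × ℝ}
    (ha : a ∈ C) (hb : b ∈ C) (hc : c ∈ C)
    (hab : a ≠ b) (hac : a ≠ c) (hbc : b ≠ c) : det2 (b - a) (c - a) ≠ 0 :=
  fun h => hC a ha b hb c hc hab hac hbc (collinear_of_det a b c h)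

/-- Lemma: `n(P_i,P_j) = α_i + α_j + σ₀ + σ_k`. -/
theorem orchard_lemma (C : Finset (ℝ × ℝ)) (hC : Generic C)
    (Pi Pj Pk : ℝ × ℝ) (hi : Pi ∈ C) (hj : Pj ∈ C) (hk : Pk ∈ C)
    (hij : Pi ≠ Pj) (hik : Pi ≠ Pk) (hjk : Pj ≠ Pk) :
    nsep C Pi Pj =
      alpha C Pi Pj Pk + alpha C Pj Pi Pk + sigma0 C Pi Pj Pk + sigmaV C Pk Pi Pj := by
  classical
  have hset1 : ({Pj, Pi, Pk} : Finset (ℝ × ℝ)) = {Pi, Pj, Pk} := by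
    ext x; simp only [Finset.mem_insert, Finset.mem_singleton]; tauto
  have hset2 : ({Pk, Pi, Pj} : Finset (ℝ × ℝ)) = {Pi, Pj, Pk} := by
    ext x; simp only [Finset.mem_insert, Finset.mem_singleton]; tauto
  have hTS : C \ ({Pi, Pj} : Finset (ℝ × ℝ)) = insert Pk (C \ ({Pi, Pj, Pk} : Finset (ℝ × ℝ))) := by
    ext x
    by_cases hx : x = Pk
    · subst hx
      simp [hk, Ne.symm hik, Ne.symm hjk]
    · simp only [Finset.mem_sdiff, Finset.mem_insert, Finset.mem_singleton]
      tauto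
  set T : Finset (ℝ × ℝ) := C \ ({Pi, Pj, Pk} : Finset (ℝ × ℝ)) with hT
  have hmemT : ∀ x, x ∈ T ↔ (x ∈ C ∧ x ≠ Pi ∧ x ≠ Pj ∧ x ≠ Pk) := by
    intro x
    simp only [hT, Finset.mem_sdiff, Finset.mem_insert, Finset.mem_singleton]
    tauto
  have hPkT : Pk ∉ T := by simp [hmemT]
  -- nonzero determinant facts for X ∈ T
  have hdets : ∀ X ∈ T, det2 (Pi - Pk) (X - Pk) ≠ 0 ∧ det2 (Pj - Pk) (X - Pk) ≠ 0 ∧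
      det2 (Pj - Pi) (X - Pi) ≠ 0 := by
    intro X hX
    obtain ⟨hXC, hXi, hXj, hXk⟩ := (hmemT X).mp hX
    exact ⟨det_ne hC hk hi hXC (Ne.symm hik) (Ne.symm hXk) (Ne.symm hXi),
      det_ne hC hk hj hXC (Ne.symm hjk) (Ne.symm hXk) (Ne.symm hXj),
      det_ne hC hi hj hXC hij (Ne.symm hXi) (Ne.symm hXj)⟩
  have hD : det2 (Pj - Pi) (Pk - Pi) ≠ 0 := det_ne hC hi hj hk hij hik hjk
  -- the three pieces
  set F1 : Finset (Finset (ℝ × ℝ)) := (T.powersetCard 2).filter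
    (fun s => ∃ A ∈ s, ∃ B ∈ s, A ≠ B ∧ SepLine A B Pi Pj ∧ SepLine A B Pi Pk) with hF1
  set F2 : Finset (Finset (ℝ × ℝ)) := (T.powersetCard 2).filter
    (fun s => ∃ A ∈ s, ∃ B ∈ s, A ≠ B ∧ SepLine A B Pj Pi ∧ SepLine A B Pj Pk) with hF2
  set G : Finset (Finset (ℝ × ℝ)) := (T.filter
    (fun X => InDelta0 Pi Pj Pk X ∨ InDeltaV Pk Pi Pj X)).image
      (fun X => ({Pk, X} : Finset (ℝ × ℝ))) with hG
  have main : ((insert Pk T).powersetCard 2).filter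
      (fun s => ∃ A ∈ s, ∃ B ∈ s, A ≠ B ∧ SepLine A B Pi Pj) = (F1 ∪ F2) ∪ G := by
    ext s
    simp only [hF1, hF2, hG, Finset.mem_union, Finset.mem_filter, Finset.mem_powersetCard,
      Finset.mem_image]
    constructor
    · rintro ⟨⟨hsub, hcard⟩, hP⟩
      obtain ⟨A, B, hAB, rfl⟩ := Finset.card_eq_two.mp hcard
      by_cases hPk : Pk ∈ ({A, B} : Finset (ℝ × ℝ))
      · right
        -- normalize to {Pk, X}
        have key : ∀ X : ℝ × ℝ, X ∈ T → SepLine Pk X Pi Pj →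
            (∃ Y, (Y ∈ T ∧ (InDelta0 Pi Pj Pk Y ∨ InDeltaV Pk Pi Pj Y)) ∧
              ({Pk, Y} : Finset (ℝ × ℝ)) = {A, B}) → True := fun _ _ _ _ => trivial
        have hsep : SepLine A B Pi Pj :=
          pair_norm hAB (fun x y h => (sep_comm x y Pi Pj).mp h) hP
        rcases Finset.mem_insert.mp hPk with rfl | hPk'
        · -- Pk = A
          have hBT : B ∈ T := by
            have hBS : B ∈ insert Pk T := hsub (by simp)
            rcases Finset.mem_insert.mp hBS with rfl | h
            · exact absurd rfl hAB
            · exact h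
          obtain ⟨ha, hb, hc⟩ := hdets B hBT
          refine ⟨B, ⟨hBT, ?_⟩, rfl⟩
          exact (key_geom Pi Pj Pk B ha hb hc hD).mp hsep
        · have hBPk : Pk = B := Finset.mem_singleton.mp hPk'
          subst hBPk
          have hAT : A ∈ T := by
            have hAS : A ∈ insert Pk T := hsub (by simp)
            rcases Finset.mem_insert.mp hAS with rfl | h
            · exact absurd rfl hAB
            · exact h
          obtain ⟨ha, hb, hc⟩ := hdets A hAT
          refine ⟨A, ⟨hAT, ?_⟩, Finset.pair_comm Pk A⟩
          exact (key_geom Pi Pj Pk A ha hb hc hD).mp ((sep_comm A Pk Pi Pj).mp hsep)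
      · left
        have hsubT : ({A, B} : Finset (ℝ × ℝ)) ⊆ T := by
          intro x hx
          rcases Finset.mem_insert.mp (hsub hx) with rfl | h
          · exact absurd hx hPk
          · exact h
        have hsep : SepLine A B Pi Pj :=
          pair_norm hAB (fun x y h => (sep_comm x y Pi Pj).mp h) hP
        have hAT : A ∈ T := hsubT (by simp)
        have hBT : B ∈ T := hsubT (by simp)
        obtain ⟨hAC, hAi, hAj, hAk⟩ := (hmemT A).mp hAT
        obtain ⟨hBC, hBi, hBj, hBk⟩ := (hmemT B).mp hBT
        have hr : det2 (B - A) (Pk - A) ≠ 0 := det_ne hC hAC hBC hk hAB hAk hBk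
        rcases split_prod _ _ _ hsep hr with h | h
        · exact Or.inl ⟨⟨hsubT, hcard⟩, A, by simp, B, by simp, hAB, hsep, h⟩
        · refine Or.inr ⟨⟨hsubT, hcard⟩, A, by simp, B, by simp, hAB, ?_, h⟩
          unfold SepLine at hsep ⊢
          linarith [hsep, mul_comm (det2 (B - A) (Pi - A)) (det2 (B - A) (Pj - A))]
    · rintro ((⟨⟨hsub, hcard⟩, A, hA, B, hB, hAB, h1, h2⟩ | ⟨⟨hsub, hcard⟩, A, hA, B, hB, hAB, h1, h2⟩) | ⟨X, ⟨hXT, hQ⟩, rfl⟩)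
      · exact ⟨⟨hsub.trans (Finset.subset_insert _ _), hcard⟩, A, hA, B, hB, hAB, h1⟩
      · refine ⟨⟨hsub.trans (Finset.subset_insert _ _), hcard⟩, A, hA, B, hB, hAB, ?_⟩
        unfold SepLine at h1 ⊢
        linarith [h1, mul_comm (det2 (B - A) (Pi - A)) (det2 (B - A) (Pj - A))]
      · obtain ⟨hXC, hXi, hXj, hXk⟩ := (hmemT X).mp hXT
        obtain ⟨ha, hb, hc⟩ := hdets X hXT
        have hsub : ({Pk, X} : Finset (ℝ × ℝ)) ⊆ insert Pk T := by
          intro x hx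
          rcases Finset.mem_insert.mp hx with rfl | hx'
          · exact Finset.mem_insert_self _ _
          · exact Finset.mem_insert_of_mem (Finset.mem_singleton.mp hx' ▸ hXT)
        refine ⟨⟨hsub, ?_⟩, Pk, by simp, X, by simp, Ne.symm hXk, ?_⟩
        · rw [Finset.card_insert_of_notMem (by simp only [Finset.mem_singleton]; exact Ne.symm hXk)]
          simp
        · exact (key_geom Pi Pj Pk X ha hb hc hD).mpr hQ
  have hd2 : Disjoint F1 F2 := by
    rw [Finset.disjoint_left]
    intro s hs1 hs2
    rw [hF1, Finset.mem_filter, Finset.mem_powersetCard] at hs1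
    rw [hF2, Finset.mem_filter, Finset.mem_powersetCard] at hs2
    obtain ⟨⟨hsub, hcard⟩, hP1⟩ := hs1
    obtain ⟨_, hP2⟩ := hs2
    obtain ⟨A, B, hAB, rfl⟩ := Finset.card_eq_two.mp hcard
    have h1 : SepLine A B Pi Pj ∧ SepLine A B Pi Pk :=
      pair_norm hAB (fun x y h => ⟨(sep_comm x y Pi Pj).mp h.1, (sep_comm x y Pi Pk).mp h.2⟩) hP1
    have h2 : SepLine A B Pj Pi ∧ SepLine A B Pj Pk :=
      pair_norm hAB (fun x y h => ⟨(sep_comm x y Pj Pi).mp h.1, (sep_comm x y Pj Pk).mp h.2⟩) hP2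
    exact three_prod (det2 (B - A) (Pi - A)) (det2 (B - A) (Pj - A)) (det2 (B - A) (Pk - A))
      h1.1 h1.2 h2.2
  have hd1 : Disjoint (F1 ∪ F2) G := by
    rw [Finset.disjoint_left]
    intro s hs hsG
    have hPks : Pk ∉ s := by
      rcases Finset.mem_union.mp hs with h | h
      · rw [hF1, Finset.mem_filter, Finset.mem_powersetCard] at h
        exact fun hmem => hPkT (h.1.1 hmem)
      · rw [hF2, Finset.mem_filter, Finset.mem_powersetCard] at h
        exact fun hmem => hPkT (h.1.1 hmem)
    rw [hG, Finset.mem_image] at hsG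
    obtain ⟨X, _, rfl⟩ := hsG
    exact hPks (by simp)
  have hinj : Set.InjOn (fun X => ({Pk, X} : Finset (ℝ × ℝ)))
      ↑(T.filter (fun X => InDelta0 Pi Pj Pk X ∨ InDeltaV Pk Pi Pj X)) := by
    intro X hX Y hY h
    simp only [Finset.coe_filter, Set.mem_setOf_eq] at hX hY
    have hXk : X ≠ Pk := ((hmemT X).mp hX.1).2.2.2
    have h' : ({Pk, X} : Finset (ℝ × ℝ)) = {Pk, Y} := h
    have : X ∈ ({Pk, Y} : Finset (ℝ × ℝ)) := h' ▸ (by simp : X ∈ ({Pk, X} : Finset (ℝ × ℝ)))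
    rcases Finset.mem_insert.mp this with h' | h'
    · exact absurd h' hXk
    · exact Finset.mem_singleton.mp h'
  have hd3 : Disjoint (T.filter (fun X => InDelta0 Pi Pj Pk X))
      (T.filter (fun X => InDeltaV Pk Pi Pj X)) := by
    rw [Finset.disjoint_left]
    intro X h1 h2
    rw [Finset.mem_filter] at h1 h2
    exact delta_disj Pi Pj Pk X ⟨h1.2, h2.2⟩
  -- put it together
  rw [nsep, alpha, alpha, sigma0, sigmaV, hset1, hset2, hTS, ← hT, main,
    Finset.card_union_of_disjoint hd1, Finset.card_union_of_disjoint hd2, hG,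
    Finset.card_image_of_injOn hinj, Finset.filter_or,
    Finset.card_union_of_disjoint hd3, hF1, hF2]
  ring
end
end

section
/- Let R,S be two infinitesimally-close points of a generic configuration P of n points, let L be the line through R and S, and let P' = P∖{R,S}. For P,Q ∈ P' : if L does not separate P and Q then n_P(P,Q) ≡ n_{P'}(P,Q) (mod 2), and if L separates P and Q then n_P(P,Q) ≡ n_{P'}(P,Q) + 1 (mod 2). Consequently P ∼_P Q iff P ∼_{P'} Q in the first case, and P ∼_P Q iff P ≁_{P'} Q in the second case. -/
/-! Split the pairs of `C \ {P, Q}` according to how many of `R, S` they contain. Pairs avoiding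
both count `n_{C \ {R, S}}(P, Q)`, and `{R, S}` counts iff the line `RS` separates `P` and `Q`.
The remaining pairs come in couples `{R, X}`, `{S, X}`: since `n(R, S) = 0`, neither line `XP`
nor `XQ` separates `R` from `S`, so `R` and `S` lie on the same sides of both lines and `RX`
separates `P` from `Q` iff `SX` does. These couples contribute an even number, and deleting two
points does not change the parity of `|C| - 3`. -/

open scoped Classical

noncomputable section

section PairCount

variable {α : Type*} [DecidableEq α]

def pairCount (r : α → α → Prop) (D : Finset α) : ℕ :=
  ((D.powersetCard 2).filter (fun s => ∃ A ∈ s, ∃ B ∈ s, A ≠ B ∧ r A B)).card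

variable {r : α → α → Prop}

lemma exists_rel_pair_iff (hr : ∀ x y, r x y → r y x) {a b : α} (hab : a ≠ b) :
    (∃ A ∈ ({a, b} : Finset α), ∃ B ∈ ({a, b} : Finset α), A ≠ B ∧ r A B) ↔ r a b := by
  refine ⟨?_, fun h => ⟨a, by simp, b, by simp, hab, h⟩⟩
  rintro ⟨A, hA, B, hB, hAB, h⟩
  simp only [Finset.mem_insert, Finset.mem_singleton] at hA hB
  rcases hA with rfl | rfl <;> rcases hB with rfl | rfl
  exacts [absurd rfl hAB, h, hr _ _ h, absurd rfl hAB]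

lemma pairCount_insert (hr : ∀ x y, r x y → r y x) {a : α} {D : Finset α} (ha : a ∉ D) :
    pairCount r (insert a D) = pairCount r D + (D.filter (r a)).card := by
  have hne : ∀ x ∈ D, a ≠ x := fun x hx h => ha (h ▸ hx)
  unfold pairCount
  rw [Finset.powersetCard_succ_insert ha 1, Finset.filter_union, Finset.card_union_of_disjoint,
    Finset.powersetCard_one, Finset.map_eq_image, Finset.image_image, Finset.filter_image,
    Finset.card_image_of_injOn]
  · congr 2
    exact Finset.filter_congr fun x hx => exists_rel_pair_iff hr (hne x hx)
  · intro x _ y hy hxy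
    have hxy : ({a, x} : Finset α) = {a, y} := hxy
    have hyx : y ∈ ({a, x} : Finset α) := hxy ▸ by simp
    rw [Finset.mem_insert, Finset.mem_singleton] at hyx
    exact (hyx.resolve_left (hne y (Finset.mem_filter.1 hy).1).symm).symm
  · refine Finset.disjoint_left.2 fun s hs hs' => ?_
    obtain ⟨x, -, rfl⟩ := Finset.mem_image.1 (Finset.mem_filter.1 hs').1
    exact ha ((Finset.mem_powersetCard.1 (Finset.mem_filter.1 hs).1).1 (by simp))

lemma pairCount_insert_insert (hr : ∀ x y, r x y → r y x) {a b : α} {D : Finset α}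
    (hab : a ≠ b) (ha : a ∉ D) (hb : b ∉ D) (hrel : ∀ x ∈ D, r a x ↔ r b x) :
    pairCount r (insert a (insert b D)) =
      pairCount r D + 2 * (D.filter (r a)).card + if r a b then 1 else 0 := by
  rw [pairCount_insert hr (by simp [hab, ha]), pairCount_insert hr hb, Finset.filter_insert,
    Finset.filter_congr hrel]
  split_ifs
  · rw [Finset.card_insert_of_notMem (by simp [hb])]; ring
  · ring

lemma not_rel_of_pairCount_eq_zero {D : Finset α} (h : pairCount r D = 0)
    {a b : α} (ha : a ∈ D) (hb : b ∈ D) (hab : a ≠ b) : ¬ r a b := fun hr => by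
  refine Finset.card_ne_zero.2 ⟨{a, b}, Finset.mem_filter.2 ⟨?_, a, by simp, b, by simp, hab, hr⟩⟩ h
  exact Finset.mem_powersetCard.2 ⟨Finset.insert_subset ha (by simpa), Finset.card_pair hab⟩

end PairCount

lemma mul_neg_iff_mul_neg_of_mul_pos {α : Type*} [CommRing α] [LinearOrder α]
    [IsStrictOrderedRing α] {a b c d : α} (hab : 0 < a * b) (hcd : 0 < c * d) :
    a * c < 0 ↔ b * d < 0 := by
  have : 0 < (a * c) * (b * d) := by linear_combination mul_pos hab hcd
  constructor <;> intro h <;> nlinarith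

lemma det2_sub_comm (X R P : ℝ × ℝ) : det2 (X - R) (P - R) = det2 (P - X) (R - X) := by
  simp only [det2, Prod.fst_sub, Prod.snd_sub]; ring

lemma collinear_of_det2_eq_zero {a b c : ℝ × ℝ} (h : det2 (b - a) (c - a) = 0) :
    Collinear ℝ ({a, b, c} : Set (ℝ × ℝ)) := by
  obtain rfl | hab := eq_or_ne a b
  · simpa using collinear_pair ℝ a c
  have hu : 0 < (b.1 - a.1) ^ 2 + (b.2 - a.2) ^ 2 := by
    by_contra! hle
    exact hab (Prod.ext (by nlinarith) (by nlinarith))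
  simp only [det2, Prod.fst_sub, Prod.snd_sub] at h
  -- `c - a` equals its projection onto `b - a`, because its normal component is `h`
  have hc : AffineMap.lineMap a b
      (((c.1 - a.1) * (b.1 - a.1) + (c.2 - a.2) * (b.2 - a.2)) /
        ((b.1 - a.1) ^ 2 + (b.2 - a.2) ^ 2)) = c := by
    ext <;> simp only [AffineMap.lineMap_apply_module', Prod.fst_add, Prod.snd_add, Prod.smul_fst,
      Prod.smul_snd, Prod.fst_sub, Prod.snd_sub, smul_eq_mul] <;> field_simp
    · linear_combination (b.2 - a.2) * h
    · linear_combination -(b.1 - a.1) * h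
  have := collinear_insert_of_mem_affineSpan_pair (hc ▸ AffineMap.lineMap_mem_affineSpan_pair _ a b)
  rwa [Set.insert_comm c, Set.pair_comm c] at this

lemma sepLine_comm {A B P Q : ℝ × ℝ} : SepLine A B P Q ↔ SepLine B A P Q := by
  unfold SepLine det2
  simp only [Prod.fst_sub, Prod.snd_sub]
  constructor <;> intro h <;> linarith

lemma sepLine_iff_of_not_sepLine {X P Q R S : ℝ × ℝ}
    (hXPR : ¬ Collinear ℝ ({X, P, R} : Set (ℝ × ℝ)))
    (hXPS : ¬ Collinear ℝ ({X, P, S} : Set (ℝ × ℝ)))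
    (hXQR : ¬ Collinear ℝ ({X, Q, R} : Set (ℝ × ℝ)))
    (hXQS : ¬ Collinear ℝ ({X, Q, S} : Set (ℝ × ℝ)))
    (hP : ¬ SepLine X P R S) (hQ : ¬ SepLine X Q R S) :
    SepLine R X P Q ↔ SepLine S X P Q := by
  unfold SepLine at *
  rw [det2_sub_comm X R P, det2_sub_comm X R Q, det2_sub_comm X S P, det2_sub_comm X S Q]
  have hPR := mt collinear_of_det2_eq_zero hXPR
  have hPS := mt collinear_of_det2_eq_zero hXPS
  have hQR := mt collinear_of_det2_eq_zero hXQR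
  have hQS := mt collinear_of_det2_eq_zero hXQS
  have hPRS : 0 < det2 (P - X) (R - X) * det2 (P - X) (S - X) :=
    (not_lt.1 hP).lt_of_ne' (mul_ne_zero hPR hPS)
  have hQRS : 0 < det2 (Q - X) (R - X) * det2 (Q - X) (S - X) :=
    (not_lt.1 hQ).lt_of_ne' (mul_ne_zero hQR hQS)
  exact mul_neg_iff_mul_neg_of_mul_pos hPRS hQRS

lemma nsep_eq_pairCount (C : Finset (ℝ × ℝ)) (P Q : ℝ × ℝ) :
    nsep C P Q = pairCount (fun A B => SepLine A B P Q) (C \ {P, Q}) := rfl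

lemma sepLine_iff_of_nsep_eq_zero {C : Finset (ℝ × ℝ)} (hC : Generic C) {R S : ℝ × ℝ}
    (hR : R ∈ C) (hS : S ∈ C) (hclose : nsep C R S = 0) {P Q X : ℝ × ℝ}
    (hP : P ∈ C \ {R, S}) (hQ : Q ∈ C \ {R, S}) (hX : X ∈ C \ {R, S})
    (hXP : X ≠ P) (hXQ : X ≠ Q) :
    SepLine R X P Q ↔ SepLine S X P Q := by
  have hP' := not_rel_of_pairCount_eq_zero (r := fun A B => SepLine A B R S) hclose hX hP hXP
  have hQ' := not_rel_of_pairCount_eq_zero (r := fun A B => SepLine A B R S) hclose hX hQ hXQ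
  simp only [Finset.mem_sdiff, Finset.mem_insert, Finset.mem_singleton, not_or] at hP hQ hX
  exact sepLine_iff_of_not_sepLine
    (hC X hX.1 P hP.1 R hR hXP hX.2.1 hP.2.1) (hC X hX.1 P hP.1 S hS hXP hX.2.2 hP.2.2)
    (hC X hX.1 Q hQ.1 R hR hXQ hX.2.1 hQ.2.1) (hC X hX.1 Q hQ.1 S hS hXQ hX.2.2 hQ.2.2) hP' hQ'

lemma nsep_eq_nsep_sdiff_add {C : Finset (ℝ × ℝ)} (hC : Generic C) {R S : ℝ × ℝ}
    (hR : R ∈ C) (hS : S ∈ C) (hRS : R ≠ S) (hclose : nsep C R S = 0) {P Q : ℝ × ℝ}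
    (hP : P ∈ C \ {R, S}) (hQ : Q ∈ C \ {R, S}) :
    nsep C P Q = nsep (C \ {R, S}) P Q +
      2 * (((C \ {R, S}) \ {P, Q}).filter (fun X => SepLine R X P Q)).card +
      if SepLine R S P Q then 1 else 0 := by
  have hsplit : C \ {P, Q} = insert R (insert S ((C \ {R, S}) \ {P, Q})) := by
    simp only [Finset.mem_sdiff, Finset.mem_insert, Finset.mem_singleton, not_or] at hP hQ
    ext X
    simp only [Finset.mem_sdiff, Finset.mem_insert, Finset.mem_singleton]
    grind
  rw [nsep_eq_pairCount, hsplit, pairCount_insert_insert (fun _ _ => sepLine_comm.1) hRS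
    (by simp) (by simp)]
  · rfl
  · intro X hX
    obtain ⟨hX, hXPQ⟩ := Finset.mem_sdiff.1 hX
    simp only [Finset.mem_insert, Finset.mem_singleton, not_or] at hXPQ
    exact sepLine_iff_of_nsep_eq_zero hC hR hS hclose hP hQ hX hXPQ.1 hXPQ.2

theorem infinitesimally_close_deletion_general (C : Finset (ℝ × ℝ)) (hC : Generic C)
    (R S : ℝ × ℝ) (hR : R ∈ C) (hS : S ∈ C) (hRS : R ≠ S)
    (hclose : nsep C R S = 0)
    (P Q : ℝ × ℝ) (hP : P ∈ C) (hQ : Q ∈ C)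
    (hPout : P ≠ R ∧ P ≠ S) (hQout : Q ≠ R ∧ Q ≠ S) :
    (¬ SepLine R S P Q →
      ((nsep C P Q : ℤ) ≡ (nsep (C \ {R, S}) P Q : ℤ) [ZMOD 2] ∧
        (Orchard C P Q ↔ Orchard (C \ {R, S}) P Q))) ∧
    (SepLine R S P Q →
      ((nsep C P Q : ℤ) ≡ (nsep (C \ {R, S}) P Q : ℤ) + 1 [ZMOD 2] ∧
        (Orchard C P Q ↔ ¬ Orchard (C \ {R, S}) P Q))) := by
  have hP' : P ∈ C \ {R, S} := by simp [hP, hPout.1, hPout.2]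
  have hQ' : Q ∈ C \ {R, S} := by simp [hQ, hQout.1, hQout.2]
  have hcount := nsep_eq_nsep_sdiff_add hC hR hS hRS hclose hP' hQ'
  have hcard : (C \ {R, S}).card + 2 = C.card := by
    rw [← Finset.card_pair hRS]
    exact Finset.card_sdiff_add_card_eq_card (Finset.insert_subset hR (by simpa))
  simp only [Orchard, Int.ModEq]
  constructor <;> intro hsep <;> simp only [hsep, if_true, if_false] at hcount <;> omega

/-- Deleting a pair of infinitesimally-close points `R,S`: for `P,Q` not
separated by the line `L` through `R,S`, the parity of `n(P,Q)` is unchanged and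
the Orchard relation is preserved; if `L` separates `P` and `Q`, the parity
changes and the Orchard relation is reversed. -/
theorem infinitesimally_close_deletion (C : Finset (ℝ × ℝ)) (hC : Generic C)
    (R S : ℝ × ℝ) (hR : R ∈ C) (hS : S ∈ C) (hRS : R ≠ S)
    (hclose : nsep C R S = 0)
    (P Q : ℝ × ℝ) (hP : P ∈ C) (hQ : Q ∈ C) (hPQ : P ≠ Q)
    (hPout : P ≠ R ∧ P ≠ S) (hQout : Q ≠ R ∧ Q ≠ S) :
    (¬ SepLine R S P Q →
      ((nsep C P Q : ℤ) ≡ (nsep (C \ {R, S}) P Q : ℤ) [ZMOD 2] ∧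
        (Orchard C P Q ↔ Orchard (C \ {R, S}) P Q))) ∧
    (SepLine R S P Q →
      ((nsep C P Q : ℤ) ≡ (nsep (C \ {R, S}) P Q : ℤ) + 1 [ZMOD 2] ∧
        (Orchard C P Q ↔ ¬ Orchard (C \ {R, S}) P Q))) :=
  infinitesimally_close_deletion_general C hC R S hR hS hRS hclose P Q hP hQ hPout hQout
end
end
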